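/- arXiv:1410.2507 — 3 statements merged into one kernel-verified Lean document; each statement's English description precedes it below -/
import Mathlib

section
/- Define R(z) = √(2π) e^{-z} z^{z+1/2} / Γ(z+1) for z > 0. Then R is increasing on (0,∞), R(z) < 1 for all z > 0, and R(z) → 1 as z → ∞. -/
open Real Filter

/-- `R(z) = √(2π) e^{-z} z^{z+1/2} / Γ(z+1)`. -/
noncomputable def stirlingR (z : ℝ) : ℝ :=
  Real.sqrt (2 * Real.pi) * Real.exp (-z) * z ^ (z + 1 / 2) / Real.Gamma (z + 1)

/-!
Write `R z = exp (-μ z)` with Binet's function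
`μ z = log Γ(z+1) - (z + 1/2) log z + z - log √(2π)`. The atanh series for `log (1 + 1/z)` gives
`μ z - μ (z + 1) = ∑_{k ≥ 1} (2k+1)⁻¹ (2z+1)^(-2k)`, which is positive and strictly decreasing in
`z`. Log-convexity of `Γ`, together with Stirling's formula for `n!`, gives `μ (z + n) → 0` as
`n → ∞`. So `μ (z + n)` and, for `a < b`, `μ (a + n) - μ (b + n)` are strictly decreasing sequences
tending to `0`: hence `μ > 0` and `μ` is strictly decreasing, and monotonicity upgrades `μ n → 0`
to `μ z → 0` as `z → ∞`.
-/

open Set Topology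

noncomputable def binetMu (z : ℝ) : ℝ :=
  log (Gamma (z + 1)) - (z + 1 / 2) * log z + z - log √(2 * π)

lemma stirlingR_eq_exp_neg_binetMu {z : ℝ} (hz : 0 < z) : stirlingR z = exp (-binetMu z) := by
  have hΓ : 0 < Gamma (z + 1) := Gamma_pos_of_pos (by linarith)
  have hs : 0 < √(2 * π) := by positivity
  rw [stirlingR, rpow_def_of_pos hz, binetMu,
    show -(log (Gamma (z + 1)) - (z + 1 / 2) * log z + z - log √(2 * π))
      = log √(2 * π) + -z + log z * (z + 1 / 2) - log (Gamma (z + 1)) by ring,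
    exp_sub, exp_add, exp_add, exp_log hs, exp_log hΓ]

lemma binetMu_natCast {n : ℕ} (hn : n ≠ 0) :
    binetMu n = log (Stirling.stirlingSeq n) - log √π := by
  have hn₀ : (0 : ℝ) < n := by positivity
  rw [binetMu, Stirling.log_stirlingSeq_formula, Gamma_nat_eq_factorial,
    log_mul two_ne_zero hn₀.ne', log_div hn₀.ne' (exp_ne_zero 1), log_exp,
    log_sqrt (by positivity), log_sqrt pi_pos.le, log_mul two_ne_zero pi_pos.ne']
  ring

lemma tendsto_binetMu_natCast : Tendsto (fun n : ℕ => binetMu n) atTop (𝓝 0) := by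
  have h : Tendsto (fun n : ℕ => log (Stirling.stirlingSeq n) - log √π) atTop (𝓝 0) := by
    simpa using ((continuousAt_log (by positivity)).tendsto.comp
      Stirling.tendsto_stirlingSeq_sqrt_pi).sub_const (log √π)
  refine h.congr' ?_
  filter_upwards [eventually_ne_atTop 0] with n hn
  exact (binetMu_natCast hn).symm

lemma binetMu_sub_binetMu_add_one {z : ℝ} (hz : 0 < z) :
    binetMu z - binetMu (z + 1) = (z + 1 / 2) * log (1 + z⁻¹) - 1 := by
  have hΓ := Gamma_pos_of_pos (show 0 < z + 1 by linarith)
  rw [binetMu, binetMu, Gamma_add_one (by positivity : z + 1 ≠ 0),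
    log_mul (by positivity) hΓ.ne', show 1 + z⁻¹ = (z + 1) / z by field_simp,
    log_div (by positivity) hz.ne']
  ring

lemma hasSum_binetMu_sub_binetMu_add_one {z : ℝ} (hz : 0 < z) :
    HasSum (fun k : ℕ => 1 / (2 * (k + 1 : ℝ) + 1) * ((2 * z + 1) ^ 2)⁻¹ ^ (k + 1))
      (binetMu z - binetMu (z + 1)) := by
  let f (k : ℕ) : ℝ := 1 / (2 * k + 1) * ((2 * z + 1) ^ 2)⁻¹ ^ k
  have hf : HasSum f ((z + 1 / 2) * log (1 + z⁻¹)) := by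
    convert! (hasSum_log_one_add_inv hz).mul_left (z + 1 / 2) using 1
    funext k
    rw [pow_succ, pow_mul]
    simp only [f]
    field_simp
  rw [binetMu_sub_binetMu_add_one hz]
  convert! (hasSum_nat_add_iff' 1).mpr hf using 1
  · funext k
    push_cast [f]
    rfl
  · simp [f]

lemma binetMu_add_one_lt {z : ℝ} (hz : 0 < z) : binetMu (z + 1) < binetMu z :=
  sub_pos.mp <| hasSum_lt (i := 0) (fun k => by positivity) (by positivity) hasSum_zero
    (hasSum_binetMu_sub_binetMu_add_one hz)

lemma binetMu_sub_binetMu_add_one_lt {a b : ℝ} (ha : 0 < a) (hab : a < b) :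
    binetMu b - binetMu (b + 1) < binetMu a - binetMu (a + 1) := by
  refine hasSum_lt (i := 0) (fun k => ?_) ?_ (hasSum_binetMu_sub_binetMu_add_one (ha.trans hab))
    (hasSum_binetMu_sub_binetMu_add_one ha)
  · dsimp only
    gcongr
  · simp only [CharP.cast_eq_zero, zero_add, pow_one]
    gcongr

lemma tendsto_add_mul_log_one_add_div_atTop (c t : ℝ) :
    Tendsto (fun x => (x + c) * log (1 + t / x)) atTop (𝓝 t) := by
  have hlog : Tendsto (fun x => log (1 + t / x)) atTop (𝓝 0) := by
    have h : Tendsto (fun x => 1 + t / x) atTop (𝓝 1) := by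
      simpa using ((tendsto_const_nhds (x := t)).div_atTop tendsto_id).const_add 1
    simpa [Function.comp_def] using (continuousAt_log one_ne_zero).tendsto.comp h
  simpa [add_mul] using (tendsto_mul_log_one_add_div_atTop t).add (hlog.const_mul c)

-- Log-convexity of `Γ` squeezes `log Γ (n + 1 + t) - log Γ (n + 1)` between `t log n` and
-- `t log (n + 1)`.
lemma tendsto_log_Gamma_natCast_add_one_add_sub {t : ℝ} (ht₀ : 0 ≤ t) (ht₁ : t ≤ 1) :
    Tendsto (fun n : ℕ => log (Gamma (n + 1 + t)) - log (Gamma (n + 1)) - t * log n)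
      atTop (𝓝 0) := by
  rcases ht₀.eq_or_lt with rfl | ht₀
  · simp
  have hfeq : ∀ {y : ℝ}, 0 < y → (log ∘ Gamma) (y + 1) = (log ∘ Gamma) y + log y :=
    fun hy => by
      simp only [Function.comp_apply]
      rw [Gamma_add_one hy.ne', log_mul hy.ne' (Gamma_pos_of_pos hy).ne', add_comm]
  refine tendsto_of_tendsto_of_tendsto_of_le_of_le' tendsto_const_nhds
    (by simpa using tendsto_log_nat_add_one_sub_log.const_mul t) ?_ ?_
  · filter_upwards [eventually_ne_atTop 0] with n hn
    have := BohrMollerup.f_add_nat_ge convexOn_log_Gamma hfeq (n := n + 1) (by omega) ht₀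
    push_cast at this
    simp only [Function.comp_apply, add_sub_cancel_right] at this
    linarith
  · filter_upwards with n
    have := BohrMollerup.f_add_nat_le convexOn_log_Gamma hfeq (n := n + 1) (by omega) ht₀ ht₁
    push_cast at this
    simp only [Function.comp_apply] at this
    linarith

lemma tendsto_binetMu_natCast_add {t : ℝ} (ht₀ : 0 ≤ t) (ht₁ : t ≤ 1) :
    Tendsto (fun n : ℕ => binetMu (n + t)) atTop (𝓝 0) := by
  have hlim := (tendsto_binetMu_natCast.add
    (tendsto_log_Gamma_natCast_add_one_add_sub ht₀ ht₁)).add ((tendsto_const_nhds (x := t)).sub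
      ((tendsto_add_mul_log_one_add_div_atTop (t + 1 / 2) t).comp tendsto_natCast_atTop_atTop))
  rw [add_zero, sub_self, add_zero] at hlim
  refine hlim.congr' ?_
  filter_upwards [eventually_ne_atTop 0] with n hn
  have hn₀ : (0 : ℝ) < n := by positivity
  have hlog : log (n + t) = log n + log (1 + t / n) := by
    rw [← log_mul hn₀.ne' (by positivity)]
    congr 1
    field_simp
  simp only [binetMu, Function.comp_apply, hlog, add_right_comm _ t 1]
  ring

lemma tendsto_binetMu_add_natCast {z : ℝ} (hz : 0 < z) :
    Tendsto (fun n : ℕ => binetMu (z + n)) atTop (𝓝 0) := by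
  have hfrac := tendsto_binetMu_natCast_add (Int.fract_nonneg z) (Int.fract_lt_one z).le
  refine (hfrac.comp (tendsto_add_atTop_nat ⌊z⌋₊)).congr fun n => ?_
  simp only [Function.comp_apply, Nat.cast_add]
  congr 1
  rw [Int.fract, ← natCast_floor_eq_intCast_floor hz.le]
  ring

lemma StrictAnti.lt_of_tendsto {α : Type*} [TopologicalSpace α] [Preorder α]
    [OrderClosedTopology α] {s : ℕ → α} {a : α} (hs : StrictAnti s)
    (hlim : Tendsto s atTop (𝓝 a)) (n : ℕ) : a < s n :=
  (hs.antitone.le_of_tendsto hlim (n + 1)).trans_lt (hs n.lt_succ_self)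

lemma binetMu_pos {z : ℝ} (hz : 0 < z) : 0 < binetMu z := by
  have hs : StrictAnti fun n : ℕ => binetMu (z + n) := strictAnti_nat_of_succ_lt fun n => by
    simpa [← add_assoc] using binetMu_add_one_lt (by positivity : 0 < z + n)
  simpa using hs.lt_of_tendsto (tendsto_binetMu_add_natCast hz) 0

lemma strictAntiOn_binetMu : StrictAntiOn binetMu (Ioi 0) := by
  intro a (ha : 0 < a) b (hb : 0 < b) hab
  have hs : StrictAnti fun n : ℕ => binetMu (a + n) - binetMu (b + n) :=
    strictAnti_nat_of_succ_lt fun n => by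
      have := binetMu_sub_binetMu_add_one_lt (by positivity : 0 < a + n)
        (by linarith : a + n < b + n)
      push_cast
      simp only [← add_assoc]
      linarith
  have hlim := (tendsto_binetMu_add_natCast ha).sub (tendsto_binetMu_add_natCast hb)
  rw [sub_zero] at hlim
  simpa using hs.lt_of_tendsto hlim 0

lemma tendsto_binetMu_atTop : Tendsto binetMu atTop (𝓝 0) := by
  refine tendsto_of_tendsto_of_tendsto_of_le_of_le' tendsto_const_nhds
    (tendsto_binetMu_natCast.comp tendsto_nat_floor_atTop) ?_ ?_
  · filter_upwards [eventually_gt_atTop 0] with x hx using (binetMu_pos hx).le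
  · filter_upwards [eventually_ge_atTop 1] with x hx
    change binetMu x ≤ binetMu ⌊x⌋₊
    exact strictAntiOn_binetMu.antitoneOn (mem_Ioi.2 (Nat.cast_pos.2 (Nat.floor_pos.2 hx)))
      (show 0 < x by linarith) (Nat.floor_le (by linarith))

theorem stirlingR_properties :
    StrictMonoOn stirlingR (Set.Ioi 0) ∧
    (∀ z > (0 : ℝ), stirlingR z < 1) ∧
    Tendsto stirlingR atTop (nhds 1) := by
  refine ⟨fun a ha b hb hab => ?_, fun z hz => ?_, ?_⟩
  · rw [stirlingR_eq_exp_neg_binetMu ha, stirlingR_eq_exp_neg_binetMu hb]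
    exact exp_lt_exp.2 (neg_lt_neg (strictAntiOn_binetMu ha hb hab))
  · rw [stirlingR_eq_exp_neg_binetMu hz]
    exact exp_lt_one_iff.2 (neg_lt_zero.2 (binetMu_pos hz))
  · have hexp : Tendsto (fun z => exp (-binetMu z)) atTop (𝓝 1) := by
      simpa using tendsto_binetMu_atTop.neg.rexp
    refine hexp.congr' ?_
    filter_upwards [eventually_gt_atTop 0] with z hz using (stirlingR_eq_exp_neg_binetMu hz).symm
end

section
/- If ξ is gamma distributed with shape x/b and scale b (x > 0, b > 0), and f : (0,∞) → ℝ is twice continuously differentiable with bounded second derivative, then E[f(ξ)] = f(x) + (xb/2) f''(x) + o(b) as b → 0⁺. -/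
/-
Expand `f` to second order at `x`. Since the gamma kernel is a probability density with mean `x`
and variance `x b`, the Taylor polynomial integrates to `f x + x b / 2 * f'' x`. By continuity of
`f''` at `x` the remainder is at most `ε (t - x)²` near `x`; by boundedness of `f''` it is at most
`K (t - x)² ≤ K / δ² (t - x)⁴` far from `x`. As the fourth central moment is `3 x² b² + 6 x b³`,
the remainder integrates to at most `ε x b + O(b²)`.
-/

open Real MeasureTheory Filter

/-- The gamma kernel `K_{ρ,b}` with `ρ = x/b`, i.e. the gamma density with
shape `x/b` and scale `b`. -/
noncomputable def gammaKernel (x b t : ℝ) : ℝ :=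
  t ^ (x / b - 1) * Real.exp (-t / b) / (b ^ (x / b) * Real.Gamma (x / b))

open Set
open Finset (range prod_range_succ sum_range_succ sum_mul sum_congr)

section Moments

variable {x b : ℝ}

lemma gammaKernel_nonneg (hx : 0 ≤ x) (hb : 0 ≤ b) {t : ℝ} (ht : 0 ≤ t) :
    0 ≤ gammaKernel x b t :=
  div_nonneg (mul_nonneg (rpow_nonneg ht _) (exp_nonneg _))
    (mul_nonneg (rpow_nonneg hb _) (Gamma_nonneg_of_nonneg (div_nonneg hx hb)))

lemma continuousOn_gammaKernel (x b : ℝ) : ContinuousOn (gammaKernel x b) (Ioi 0) := by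
  refine ContinuousOn.div_const (ContinuousOn.mul (fun t ht => ?_) ?_) _
  · exact (continuousAt_rpow_const t _ (Or.inl (ne_of_gt ht))).continuousWithinAt
  · fun_prop

lemma rpow_mul_gammaKernel_eqOn (p : ℝ) :
    EqOn (fun t => t ^ p * gammaKernel x b t)
      (fun t => (b ^ (x / b) * Gamma (x / b))⁻¹ * (t ^ (x / b + p - 1) * exp (-(b⁻¹ * t))))
      (Ioi 0) := by
  intro t (ht : 0 < t)
  simp only [gammaKernel]
  rw [show x / b + p - 1 = p + (x / b - 1) by ring, rpow_add ht, show -t / b = -(b⁻¹ * t) by ring]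
  ring

lemma integrableOn_rpow_mul_gammaKernel (hb : 0 < b) {p : ℝ} (hp : 0 < x / b + p) :
    IntegrableOn (fun t => t ^ p * gammaKernel x b t) (Ioi 0) := by
  have h := integrableOn_rpow_mul_exp_neg_mul_rpow (s := x / b + p - 1) (by linarith) one_pos
    (inv_pos.mpr hb)
  simp only [rpow_one, neg_mul] at h
  exact IntegrableOn.congr_fun (h.const_mul _) (rpow_mul_gammaKernel_eqOn p).symm measurableSet_Ioi

lemma integral_rpow_mul_gammaKernel (hx : 0 < x) (hb : 0 < b) {p : ℝ} (hp : 0 < x / b + p) :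
    ∫ t in Ioi 0, t ^ p * gammaKernel x b t
      = b ^ p * Gamma (x / b + p) / Gamma (x / b) := by
  have hΓ : 0 < Gamma (x / b) := Gamma_pos_of_pos (div_pos hx hb)
  rw [setIntegral_congr_fun measurableSet_Ioi (rpow_mul_gammaKernel_eqOn p), integral_const_mul,
    integral_rpow_mul_exp_neg_mul_Ioi hp (inv_pos.mpr hb), one_div, inv_inv, rpow_add hb]
  field_simp

lemma integrableOn_pow_mul_gammaKernel (hx : 0 < x) (hb : 0 < b) (n : ℕ) :
    IntegrableOn (fun t => t ^ n * gammaKernel x b t) (Ioi 0) := by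
  simpa only [rpow_natCast] using
    integrableOn_rpow_mul_gammaKernel (p := n) hb (by positivity)

/-- `b ^ n Γ(x/b + n) / Γ(x/b) = b ^ n (x/b) (x/b + 1) ⋯ (x/b + n - 1)`. -/
lemma integral_pow_mul_gammaKernel (hx : 0 < x) (hb : 0 < b) (n : ℕ) :
    ∫ t in Ioi 0, t ^ n * gammaKernel x b t = ∏ i ∈ range n, (x + i * b) := by
  have hΓ : Gamma (x / b) ≠ 0 := (Gamma_pos_of_pos (div_pos hx hb)).ne'
  have hrec : ∀ n : ℕ,
      b ^ n * Gamma (x / b + n) = (∏ i ∈ range n, (x + i * b)) * Gamma (x / b) := by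
    intro n
    induction n with
    | zero => simp
    | succ n ih =>
      have hpos : 0 < x / b + n := by positivity
      rw [prod_range_succ, Nat.cast_succ, ← add_assoc, Gamma_add_one hpos.ne', pow_succ]
      calc b ^ n * b * ((x / b + n) * Gamma (x / b + n))
          = (x + n * b) * (b ^ n * Gamma (x / b + n)) := by field_simp
        _ = _ := by rw [ih]; ring
  have h := integral_rpow_mul_gammaKernel (p := n) hx hb (by positivity)
  simp only [rpow_natCast] at h
  rw [h, hrec, mul_div_cancel_right₀ _ hΓ]

lemma integrableOn_sub_pow_mul_gammaKernel (hx : 0 < x) (hb : 0 < b) (n : ℕ) :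
    IntegrableOn (fun t => (t - x) ^ n * gammaKernel x b t) (Ioi 0) := by
  simp_rw [sub_eq_add_neg, add_pow, sum_mul]
  refine integrable_finsetSum _ fun m _ => ?_
  simpa only [mul_comm, mul_assoc, mul_left_comm] using
    (integrableOn_pow_mul_gammaKernel hx hb m).const_mul ((-x) ^ (n - m) * n.choose m)

lemma integral_sub_pow_mul_gammaKernel (hx : 0 < x) (hb : 0 < b) (n : ℕ) :
    ∫ t in Ioi 0, (t - x) ^ n * gammaKernel x b t
      = ∑ m ∈ range (n + 1), (-x) ^ (n - m) * n.choose m * ∏ i ∈ range m, (x + i * b) := by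
  have hterm : ∀ m, (fun t => t ^ m * (-x) ^ (n - m) * n.choose m * gammaKernel x b t)
      = fun t => (-x) ^ (n - m) * n.choose m * (t ^ m * gammaKernel x b t) :=
    fun m => funext fun t => by ring
  simp_rw [sub_eq_add_neg, add_pow, sum_mul]
  rw [integral_finsetSum _ fun m _ => by
    rw [hterm]; exact (integrableOn_pow_mul_gammaKernel hx hb m).const_mul _]
  refine sum_congr rfl fun m _ => ?_
  rw [hterm, integral_const_mul, integral_pow_mul_gammaKernel hx hb]

lemma integral_sub_sq_mul_gammaKernel (hx : 0 < x) (hb : 0 < b) :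
    ∫ t in Ioi 0, (t - x) ^ 2 * gammaKernel x b t = x * b := by
  rw [integral_sub_pow_mul_gammaKernel hx hb]
  norm_num [sum_range_succ, prod_range_succ]
  ring

lemma integral_sub_pow_four_mul_gammaKernel (hx : 0 < x) (hb : 0 < b) :
    ∫ t in Ioi 0, (t - x) ^ 4 * gammaKernel x b t = 3 * x ^ 2 * b ^ 2 + 6 * x * b ^ 3 := by
  rw [integral_sub_pow_mul_gammaKernel hx hb]
  norm_num [sum_range_succ, prod_range_succ, Nat.choose]
  ring

end Moments

noncomputable def secondOrderRemainder (f : ℝ → ℝ) (x t : ℝ) : ℝ :=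
  f t - f x - deriv f x * (t - x) - deriv (deriv f) x / 2 * (t - x) ^ 2

@[simp]
lemma secondOrderRemainder_self (f : ℝ → ℝ) (x : ℝ) : secondOrderRemainder f x x = 0 := by
  simp [secondOrderRemainder]

-- Two applications of the mean value inequality on the segment between `x` and `t`.
lemma abs_secondOrderRemainder_le {f : ℝ → ℝ} {x t M : ℝ}
    (hf : ∀ s ∈ uIcc x t, DifferentiableAt ℝ f s)
    (hf' : ∀ s ∈ uIcc x t, DifferentiableAt ℝ (deriv f) s)
    (hM : ∀ s ∈ uIcc x t, |deriv (deriv f) s - deriv (deriv f) x| ≤ M) :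
    |secondOrderRemainder f x t| ≤ M * (t - x) ^ 2 := by
  have hM0 : 0 ≤ M := by simpa using hM x left_mem_uIcc
  set G : ℝ → ℝ := fun s => deriv f s - deriv f x - deriv (deriv f) x * (s - x)
  have hG : ∀ s ∈ uIcc x t,
      HasDerivWithinAt G (deriv (deriv f) s - deriv (deriv f) x) (uIcc x t) s := fun s hs =>
    ((((hf' s hs).hasDerivAt.sub_const _).sub
      (((hasDerivAt_id s).sub_const x).const_mul (deriv (deriv f) x))).hasDerivWithinAt).congr_deriv
      (by simp)
  have hG_le : ∀ s ∈ uIcc x t, ‖G s‖ ≤ M * |t - x| := fun s hs => by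
    have h := (convex_uIcc x t).norm_image_sub_le_of_norm_hasDerivWithin_le hG hM
      left_mem_uIcc hs
    simp only [G, sub_self, mul_zero, sub_zero, norm_eq_abs] at h
    exact h.trans (mul_le_mul_of_nonneg_left (abs_sub_left_of_mem_uIcc hs) hM0)
  have hR : ∀ s ∈ uIcc x t,
      HasDerivWithinAt (secondOrderRemainder f x) (G s) (uIcc x t) s := fun s hs => by
    have h := ((((hf s hs).hasDerivAt.sub_const (f x)).sub
      (((hasDerivAt_id s).sub_const x).const_mul (deriv f x))).sub
      ((((hasDerivAt_id s).sub_const x).pow 2).const_mul (deriv (deriv f) x / 2)))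
    exact h.hasDerivWithinAt.congr_deriv (by simp only [G, id]; ring)
  have h := (convex_uIcc x t).norm_image_sub_le_of_norm_hasDerivWithin_le hR hG_le
    left_mem_uIcc right_mem_uIcc
  rwa [secondOrderRemainder_self, sub_zero, norm_eq_abs, norm_eq_abs, mul_assoc, abs_mul_abs_self,
    ← pow_two] at h

lemma exists_abs_secondOrderRemainder_le {f : ℝ → ℝ} {U : Set ℝ} (hU : IsOpen U)
    (hUc : U.OrdConnected) (hf : ContDiffOn ℝ 2 f U) {C : ℝ}
    (hC : ∀ t ∈ U, |deriv (deriv f) t| ≤ C) {x : ℝ} (hx : x ∈ U) {ε : ℝ} (hε : 0 < ε) :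
    ∃ q, ∀ t ∈ U, |secondOrderRemainder f x t| ≤ ε * (t - x) ^ 2 + q * (t - x) ^ 4 := by
  have hf1 : ContDiffOn ℝ 1 (deriv f) U := hf.deriv_of_isOpen hU (by norm_num)
  have hdf : ∀ s ∈ U, DifferentiableAt ℝ f s := fun s hs =>
    (hf.contDiffAt (hU.mem_nhds hs)).differentiableAt (by norm_num)
  have hdf' : ∀ s ∈ U, DifferentiableAt ℝ (deriv f) s := fun s hs =>
    (hf1.contDiffAt (hU.mem_nhds hs)).differentiableAt one_ne_zero
  have hcont : ContinuousAt (deriv (deriv f)) x :=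
    (hf1.continuousOn_deriv_of_isOpen hU le_rfl).continuousAt (hU.mem_nhds hx)
  obtain ⟨δ, hδ, hδε⟩ := Metric.continuousAt_iff.mp hcont ε hε
  set K := C + |deriv (deriv f) x|
  have hK : 0 ≤ K := by linarith [hC x hx, abs_nonneg (deriv (deriv f) x)]
  refine ⟨K / δ ^ 2, fun t ht => ?_⟩
  have hseg := hUc.uIcc_subset hx ht
  have hR : ∀ M, (∀ s ∈ uIcc x t, |deriv (deriv f) s - deriv (deriv f) x| ≤ M) →
      |secondOrderRemainder f x t| ≤ M * (t - x) ^ 2 := fun M =>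
    abs_secondOrderRemainder_le (fun s hs => hdf s (hseg hs)) (fun s hs => hdf' s (hseg hs))
  rcases lt_or_ge |t - x| δ with hnear | hfar
  · have h := hR ε fun s hs => (hδε ((abs_sub_left_of_mem_uIcc hs).trans_lt hnear)).le
    have : 0 ≤ K / δ ^ 2 * (t - x) ^ 4 := by positivity
    linarith
  · have h := hR K fun s hs =>
      (abs_sub _ _).trans (add_le_add_left (hC s (hseg hs)) _)
    have hδt : δ ^ 2 ≤ (t - x) ^ 2 := by simpa only [sq_abs] using pow_le_pow_left₀ hδ.le hfar 2
    have : K * (t - x) ^ 2 ≤ K / δ ^ 2 * (t - x) ^ 4 := by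
      rw [div_mul_eq_mul_div, le_div_iff₀ (by positivity)]
      nlinarith [mul_le_mul_of_nonneg_left hδt (mul_nonneg hK (sq_nonneg (t - x)))]
    nlinarith [mul_nonneg hε.le (sq_nonneg (t - x))]

lemma continuousOn_secondOrderRemainder {f : ℝ → ℝ} {U : Set ℝ} (hf : ContinuousOn f U) (x : ℝ) :
    ContinuousOn (secondOrderRemainder f x) U := by
  unfold secondOrderRemainder
  fun_prop

section Bias

variable {x b : ℝ} (hx : 0 < x) (hb : 0 < b)
include hx hb

lemma norm_mul_gammaKernel_le {g : ℝ → ℝ} {ε q : ℝ}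
    (hgb : ∀ t ∈ Ioi 0, |g t| ≤ ε * (t - x) ^ 2 + q * (t - x) ^ 4) :
    ∀ᵐ t ∂volume.restrict (Ioi 0), ‖g t * gammaKernel x b t‖
      ≤ ε * ((t - x) ^ 2 * gammaKernel x b t) + q * ((t - x) ^ 4 * gammaKernel x b t) := by
  refine (ae_restrict_iff' measurableSet_Ioi).mpr (Eventually.of_forall fun t ht => ?_)
  have hK := gammaKernel_nonneg hx.le hb.le (le_of_lt ht)
  rw [norm_mul, norm_eq_abs, norm_of_nonneg hK]
  nlinarith [mul_le_mul_of_nonneg_right (hgb t ht) hK]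

lemma integrableOn_mul_gammaKernel_of_abs_le {g : ℝ → ℝ} (hg : ContinuousOn g (Ioi 0)) {ε q : ℝ}
    (hgb : ∀ t ∈ Ioi 0, |g t| ≤ ε * (t - x) ^ 2 + q * (t - x) ^ 4) :
    IntegrableOn (fun t => g t * gammaKernel x b t) (Ioi 0) :=
  Integrable.mono' (((integrableOn_sub_pow_mul_gammaKernel hx hb 2).const_mul ε).add
    ((integrableOn_sub_pow_mul_gammaKernel hx hb 4).const_mul q))
    ((hg.mul (continuousOn_gammaKernel x b)).aestronglyMeasurable measurableSet_Ioi)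
    (norm_mul_gammaKernel_le hx hb hgb)

lemma abs_integral_mul_gammaKernel_le {g : ℝ → ℝ} {ε q : ℝ}
    (hgb : ∀ t ∈ Ioi 0, |g t| ≤ ε * (t - x) ^ 2 + q * (t - x) ^ 4) :
    |∫ t in Ioi 0, g t * gammaKernel x b t|
      ≤ ε * (x * b) + q * (3 * x ^ 2 * b ^ 2 + 6 * x * b ^ 3) := by
  have i2 := (integrableOn_sub_pow_mul_gammaKernel hx hb 2).const_mul ε
  have i4 := (integrableOn_sub_pow_mul_gammaKernel hx hb 4).const_mul q
  have h := norm_integral_le_of_norm_le (i2.add i4) (norm_mul_gammaKernel_le hx hb hgb)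
  rwa [integral_add' i2 i4, norm_eq_abs, integral_const_mul, integral_const_mul,
    integral_sub_sq_mul_gammaKernel hx hb, integral_sub_pow_four_mul_gammaKernel hx hb] at h

lemma integral_mul_gammaKernel_eq_add_remainder (f : ℝ → ℝ)
    (hR : IntegrableOn (fun t => secondOrderRemainder f x t * gammaKernel x b t) (Ioi 0)) :
    ∫ t in Ioi 0, f t * gammaKernel x b t
      = f x + x * b / 2 * deriv (deriv f) x
        + ∫ t in Ioi 0, secondOrderRemainder f x t * gammaKernel x b t := by
  have i0 := (integrableOn_pow_mul_gammaKernel hx hb 0).const_mul (f x)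
  have i1 := (integrableOn_sub_pow_mul_gammaKernel hx hb 1).const_mul (deriv f x)
  have i2 := (integrableOn_sub_pow_mul_gammaKernel hx hb 2).const_mul (deriv (deriv f) x / 2)
  have hsplit : (fun t => f t * gammaKernel x b t) = fun t =>
      secondOrderRemainder f x t * gammaKernel x b t + f x * (t ^ 0 * gammaKernel x b t)
        + deriv f x * ((t - x) ^ 1 * gammaKernel x b t)
        + deriv (deriv f) x / 2 * ((t - x) ^ 2 * gammaKernel x b t) := by
    funext t; simp only [secondOrderRemainder]; ring
  rw [hsplit, integral_add _ i2, integral_add _ i1, integral_add hR i0, integral_const_mul,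
    integral_const_mul, integral_const_mul, integral_pow_mul_gammaKernel hx hb,
    integral_sub_pow_mul_gammaKernel hx hb 1, integral_sub_sq_mul_gammaKernel hx hb]
  · norm_num [sum_range_succ]
    ring
  · exact hR.add i0
  · exact (hR.add i0).add i1

end Bias

lemma tendsto_zero_of_forall_abs_le_add_mul {α : Type*} {l : Filter α} {F g : α → ℝ}
    (hg : Tendsto g l (nhds 0)) (hF : ∀ ε > 0, ∃ q, ∀ᶠ a in l, |F a| ≤ ε + q * g a) :
    Tendsto F l (nhds 0) := by
  refine Metric.tendsto_nhds.mpr fun ε hε => ?_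
  obtain ⟨q, hq⟩ := hF (ε / 2) (half_pos hε)
  have hsmall : ∀ᶠ a in l, q * g a < ε / 2 := by
    have hqg : Tendsto (fun a => q * g a) l (nhds 0) := by simpa using hg.const_mul q
    exact hqg.eventually (gt_mem_nhds (half_pos hε))
  filter_upwards [hq, hsmall] with a ha hsa
  rw [dist_zero_right, norm_eq_abs]
  linarith

theorem gammaKernel_bias_expansion (x : ℝ) (hx : 0 < x) (f : ℝ → ℝ)
    (hf : ContDiffOn ℝ 2 f (Set.Ioi 0))
    (hbdd : ∃ C : ℝ, ∀ t ∈ Set.Ioi (0 : ℝ), |deriv (deriv f) t| ≤ C) :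
    Tendsto (fun b : ℝ =>
        ((∫ t in Set.Ioi (0 : ℝ), f t * gammaKernel x b t)
          - f x - x * b / 2 * deriv (deriv f) x) / b)
      (nhdsWithin 0 (Set.Ioi 0)) (nhds 0) := by
  obtain ⟨C, hC⟩ := hbdd
  have hRcont := continuousOn_secondOrderRemainder hf.continuousOn x
  have hg : Tendsto (fun b : ℝ => 3 * x ^ 2 * b + 6 * x * b ^ 2) (nhdsWithin 0 (Ioi 0)) (nhds 0) :=
    tendsto_nhdsWithin_of_tendsto_nhds (Continuous.tendsto' (by fun_prop) 0 0 (by norm_num))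
  refine tendsto_zero_of_forall_abs_le_add_mul hg fun ε hε => ?_
  obtain ⟨q, hq⟩ := exists_abs_secondOrderRemainder_le isOpen_Ioi inferInstance hf hC hx
    (div_pos hε hx)
  refine ⟨q, eventually_mem_nhdsWithin.mono fun b (hb : 0 < b) => ?_⟩
  have hint := integrableOn_mul_gammaKernel_of_abs_le hx hb hRcont hq
  rw [integral_mul_gammaKernel_eq_add_remainder hx hb f hint, abs_div, abs_of_pos hb,
    div_le_iff₀ hb]
  calc |f x + x * b / 2 * deriv (deriv f) x
          + (∫ t in Ioi 0, secondOrderRemainder f x t * gammaKernel x b t)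
          - f x - x * b / 2 * deriv (deriv f) x|
      = |∫ t in Ioi 0, secondOrderRemainder f x t * gammaKernel x b t| := by ring_nf
    _ ≤ ε / x * (x * b) + q * (3 * x ^ 2 * b ^ 2 + 6 * x * b ^ 3) :=
      abs_integral_mul_gammaKernel_le hx hb hq
    _ = (ε + q * (3 * x ^ 2 * b + 6 * x * b ^ 2)) * b := by field_simp
end

section
/- (Davydov's inequality) Let X, Y be real random variables measurable with respect to σ-fields 𝒜, ℬ respectively, with ‖X‖_q < ∞ and ‖Y‖_p < ∞ where 1/p + 1/q + 1/r = 1, 1 ≤ p,q,r ≤ ∞. Then |Cov(X,Y)| ≤ 2π α(𝒜,ℬ)^{1/r} ‖X‖_q ‖Y‖_p, where α(𝒜,ℬ) = sup{|P(A∩B) − P(A)P(B)| : A ∈ 𝒜, B ∈ ℬ} is the strong mixing coefficient. -/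
open Real MeasureTheory Filter
open scoped ENNReal

/-- Covariance of two real random variables with respect to a measure `μ`. -/
noncomputable def cov' {Ω : Type*} {m0 : MeasurableSpace Ω} (μ : Measure Ω)
    (f g : Ω → ℝ) : ℝ :=
  ∫ ω, (f ω - ∫ ω', f ω' ∂μ) * (g ω - ∫ ω', g ω' ∂μ) ∂μ

/-- The strong mixing coefficient between two sub-σ-fields. -/
noncomputable def alphaMix {Ω : Type*} {m0 : MeasurableSpace Ω} (μ : Measure Ω)
    (m₁ m₂ : MeasurableSpace Ω) : ℝ :=
  sSup {r : ℝ | ∃ A B : Set Ω, MeasurableSet[m₁] A ∧ MeasurableSet[m₂] B ∧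
    r = |(μ (A ∩ B)).toReal - (μ A).toReal * (μ B).toReal|}

/-!
Bounded case. If `|Y| ≤ N` and `Y` is `m₂`-measurable, then `Cov(X, Y) = E[X η]` with
`η = E[Y | m₁] - E Y`. Writing `‖η‖₁ = Cov(ε, Y)` for the `±1`-valued sign `ε` of `η`, and then
`Cov(Y, ε) = E[Y (E[ε | m₂] - E ε)]`, the same sign trick in `m₂` reduces `‖η‖₁` to `N` times the
covariance of two `±1`-indicators, which is at most `4α`. As also `|η| ≤ 2N`, interpolation
between `L¹` and `L^∞` and Hölder give `|Cov(X, Y)| ≤ 4 α^{1/q'} N ‖X‖_q` for `1/q + 1/q' = 1`.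

General case. With `1/q' = 1/p + 1/r`, cut `Y` at level `N`: the bounded part is handled as above,
while the tail has `L^{q'}` norm at most `N^{1 - p/q'} ‖Y‖_p^{p/q'}`. The level
`N = ‖Y‖_p α^{-1/p}` makes both contributions multiples of `α^{1/r} ‖X‖_q ‖Y‖_p`, with total
constant `6 ≤ 2π`. If `α = 0` the σ-algebras are independent, and if `r = ∞` Hölder suffices.
-/

open ProbabilityTheory

lemma abs_eq_abs_rpow_one_sub_mul_abs_rpow (y θ : ℝ) : |y| = |y| ^ (1 - θ) * |y| ^ θ := by
  rw [← Real.rpow_add' (abs_nonneg _) (by simp), sub_add_cancel, Real.rpow_one]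

section Lp

variable {Ω : Type*} {m0 : MeasurableSpace Ω} {μ : Measure Ω} {f g : Ω → ℝ} {p q : ℝ≥0∞}

lemma toReal_eLpNorm_one_eq_integral_abs (hf : Integrable f μ) :
    (eLpNorm f 1 μ).toReal = ∫ ω, |f ω| ∂μ := by
  rw [eLpNorm_one_eq_lintegral_enorm, ← ofReal_integral_norm_eq_lintegral_enorm hf,
    ENNReal.toReal_ofReal (integral_nonneg fun _ => norm_nonneg _)]
  rfl

lemma abs_integral_le_toReal_eLpNorm_one (f : Ω → ℝ) :
    |∫ ω, f ω ∂μ| ≤ (eLpNorm f 1 μ).toReal := by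
  by_cases hf : Integrable f μ
  · rw [toReal_eLpNorm_one_eq_integral_abs hf]
    exact abs_integral_le_integral_abs
  · simp [integral_undef hf]

lemma abs_integral_le_toReal_eLpNorm [IsProbabilityMeasure μ] (hf : MemLp f p μ) (hp : 1 ≤ p) :
    |∫ ω, f ω ∂μ| ≤ (eLpNorm f p μ).toReal :=
  (abs_integral_le_toReal_eLpNorm_one f).trans <| ENNReal.toReal_mono hf.eLpNorm_ne_top <|
    eLpNorm_le_eLpNorm_of_exponent_le hp hf.aestronglyMeasurable

lemma abs_integral_mul_le_toReal_eLpNorm_mul [p.HolderConjugate q]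
    (hf : MemLp f p μ) (hg : MemLp g q μ) :
    |∫ ω, f ω * g ω ∂μ| ≤ (eLpNorm f p μ).toReal * (eLpNorm g q μ).toReal := by
  refine (abs_integral_le_toReal_eLpNorm_one (f * g)).trans ?_
  rw [← ENNReal.toReal_mul]
  refine ENNReal.toReal_mono (ENNReal.mul_ne_top hf.eLpNorm_ne_top hg.eLpNorm_ne_top) ?_
  simpa [mul_comm] using eLpNorm_smul_le_mul_eLpNorm hg.1 hf.1 (p := p) (q := q) (r := 1)

lemma toReal_eLpNorm_le_of_ae_abs_le_mul_rpow {K θ : ℝ} (hK : 0 ≤ K) (hθ : 0 < θ)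
    (hg : MemLp g (p * ENNReal.ofReal θ) μ) (h : ∀ᵐ ω ∂μ, |f ω| ≤ K * |g ω| ^ θ) :
    (eLpNorm f p μ).toReal ≤ K * (eLpNorm g (p * ENNReal.ofReal θ) μ).toReal ^ θ := by
  have hle : eLpNorm f p μ ≤ ENNReal.ofReal K * eLpNorm g (p * ENNReal.ofReal θ) μ ^ θ := calc
    eLpNorm f p μ ≤ eLpNorm (fun ω => K * ‖g ω‖ ^ θ) p μ :=
      eLpNorm_mono_ae_real (by simpa [Real.norm_eq_abs] using h)
    _ = _ := by
      rw [show (fun ω => K * ‖g ω‖ ^ θ) = K • fun ω => ‖g ω‖ ^ θ from rfl,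
        eLpNorm_const_smul, eLpNorm_norm_rpow g hθ, Real.enorm_eq_ofReal hK]
  refine (ENNReal.toReal_mono (by finiteness [hg.eLpNorm_ne_top]) hle).trans_eq ?_
  rw [ENNReal.toReal_mul, ENNReal.toReal_rpow, ENNReal.toReal_ofReal hK]

lemma toReal_eLpNorm_indicator_lt_abs_le {N : ℝ} (hN : 0 < N) (hq : q ≠ 0) (hq' : q ≠ ∞)
    (hqp : q ≤ p) (hp : p ≠ ∞) (hf : MemLp f p μ) :
    (eLpNorm ({ω | N < |f ω|}.indicator f) q μ).toReal
      ≤ N ^ (1 - p.toReal / q.toReal) * (eLpNorm f p μ).toReal ^ (p.toReal / q.toReal) := by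
  set θ := p.toReal / q.toReal
  have hq0 : 0 < q.toReal := ENNReal.toReal_pos hq hq'
  have hθ : 1 ≤ θ := (one_le_div hq0).2 (ENNReal.toReal_mono hp hqp)
  have hexp : q * ENNReal.ofReal θ = p := by
    rw [← ENNReal.ofReal_toReal hq', ← ENNReal.ofReal_mul hq0.le, mul_div_cancel₀ _ hq0.ne',
      ENNReal.ofReal_toReal hp]
  have hpt : ∀ᵐ ω ∂μ, |{ω | N < |f ω|}.indicator f ω| ≤ N ^ (1 - θ) * |f ω| ^ θ := by
    refine .of_forall fun ω => ?_
    by_cases hω : N < |f ω|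
    · rw [Set.indicator_of_mem (show ω ∈ {ω | N < |f ω|} from hω)]
      refine (abs_eq_abs_rpow_one_sub_mul_abs_rpow (f ω) θ).trans_le ?_
      exact mul_le_mul_of_nonneg_right (Real.rpow_le_rpow_of_nonpos hN hω.le (by linarith))
        (by positivity)
    · rw [Set.indicator_of_notMem (show ω ∉ {ω | N < |f ω|} from hω), abs_zero]
      positivity
  simpa [hexp] using toReal_eLpNorm_le_of_ae_abs_le_mul_rpow (p := q) (by positivity)
    (by linarith) (hexp ▸ hf) hpt

end Lp

section Covariance

variable {Ω : Type*} {m0 : MeasurableSpace Ω} {μ : Measure Ω} [IsProbabilityMeasure μ]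
  {f g h : Ω → ℝ} {p q : ℝ≥0∞}

lemma covariance_eq_sub_of_integrable (hf : Integrable f μ) (hg : Integrable g μ)
    (hfg : Integrable (f * g) μ) : cov[f, g; μ] = μ[f * g] - μ[f] * μ[g] := by
  have hfg' : Integrable (fun ω => f ω * g ω) μ := hfg
  simp_rw [covariance, sub_mul, mul_sub]
  rw [integral_sub, integral_sub hfg' (hf.mul_const _),
    integral_sub (hg.const_mul _) (integrable_const _),
    integral_mul_const, integral_const_mul, integral_const, probReal_univ, one_smul]
  · simp only [Pi.mul_apply]
    ring
  · exact hfg'.sub (hf.mul_const _)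
  · exact (hg.const_mul _).sub (integrable_const _)

lemma covariance_add_right_of_integrable (hf : Integrable f μ) (hg : Integrable g μ)
    (hh : Integrable h μ) (hfg : Integrable (f * g) μ) (hfh : Integrable (f * h) μ) :
    cov[f, g + h; μ] = cov[f, g; μ] + cov[f, h; μ] := by
  rw [covariance_eq_sub_of_integrable hf (hg.add hh) (by rw [mul_add]; exact hfg.add hfh),
    covariance_eq_sub_of_integrable hf hg hfg, covariance_eq_sub_of_integrable hf hh hfh,
    mul_add, integral_add' hfg hfh, integral_add' hg hh]
  ring

lemma abs_covariance_le_two_mul [p.HolderConjugate q] (hf : MemLp f p μ) (hg : MemLp g q μ) :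
    |cov[f, g; μ]| ≤ 2 * (eLpNorm f p μ).toReal * (eLpNorm g q μ).toReal := by
  have hp : 1 ≤ p := ENNReal.HolderTriple.le p q 1
  have hq : 1 ≤ q := ENNReal.HolderTriple.le q p 1
  rw [covariance_eq_sub_of_integrable (hf.integrable hp) (hg.integrable hq) (hf.integrable_mul hg)]
  have hfg := abs_integral_mul_le_toReal_eLpNorm_mul hf hg
  have hprod := mul_le_mul (abs_integral_le_toReal_eLpNorm hf hp)
    (abs_integral_le_toReal_eLpNorm hg hq) (abs_nonneg _) ENNReal.toReal_nonneg
  have htri := abs_sub (μ[f * g]) (μ[f] * μ[g])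
  rw [abs_mul] at htri
  simp only [Pi.mul_apply] at *
  linarith

lemma ProbabilityTheory.IndepFun.covariance_eq_zero_of_integrable (hfg : f ⟂ᵢ[μ] g)
    (hf : Integrable f μ) (hg : Integrable g μ) : cov[f, g; μ] = 0 := by
  have hc : (fun ω => f ω - μ[f]) ⟂ᵢ[μ] fun ω => g ω - μ[g] :=
    hfg.comp (measurable_id.sub_const _) (measurable_id.sub_const _)
  rw [covariance, hc.integral_fun_mul_eq_mul_integral (hf.sub (integrable_const _)).1
    (hg.sub (integrable_const _)).1, integral_sub hf (integrable_const _)]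
  simp

end Covariance

section Mixing

variable {Ω : Type*} {m0 : MeasurableSpace Ω} {μ : Measure Ω} [IsProbabilityMeasure μ]
  {s A B : Set Ω}

lemma abs_le_alphaMix {m₁ m₂ : MeasurableSpace Ω} (hA : MeasurableSet[m₁] A)
    (hB : MeasurableSet[m₂] B) :
    |(μ (A ∩ B)).toReal - (μ A).toReal * (μ B).toReal| ≤ alphaMix μ m₁ m₂ := by
  refine le_csSup ⟨1, ?_⟩ ⟨A, B, hA, hB, rfl⟩
  rintro _ ⟨A, B, -, -, rfl⟩
  have h01 (C : Set Ω) : 0 ≤ (μ C).toReal ∧ (μ C).toReal ≤ 1 :=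
    ⟨ENNReal.toReal_nonneg, by simpa using ENNReal.toReal_mono (by simp) (prob_le_one (s := C))⟩
  obtain ⟨hAB₀, hAB₁⟩ := h01 (A ∩ B)
  obtain ⟨hA₀, hA₁⟩ := h01 A
  obtain ⟨hB₀, hB₁⟩ := h01 B
  exact abs_sub_le_of_nonneg_of_le hAB₀ hAB₁ (mul_nonneg hA₀ hB₀) (mul_le_one₀ hA₁ hB₀ hB₁)

lemma alphaMix_nonneg {m₁ m₂ : MeasurableSpace Ω} : 0 ≤ alphaMix μ m₁ m₂ :=
  (abs_nonneg _).trans (abs_le_alphaMix (μ := μ) (@MeasurableSet.empty _ m₁)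
    (@MeasurableSet.empty _ m₂))

lemma indep_of_alphaMix_eq_zero {m₁ m₂ : MeasurableSpace Ω} (h : alphaMix μ m₁ m₂ = 0) :
    Indep m₁ m₂ μ := by
  refine (Indep_iff _ _ _).2 fun A B hA hB => ?_
  have hle := abs_le_alphaMix (μ := μ) hA hB
  rw [h, abs_nonpos_iff, sub_eq_zero, ← ENNReal.toReal_mul] at hle
  exact (ENNReal.toReal_eq_toReal_iff' (measure_ne_top _ _)
    (ENNReal.mul_ne_top (measure_ne_top _ _) (measure_ne_top _ _))).1 hle

noncomputable def pmIndicator (s : Set Ω) (ω : Ω) : ℝ := 2 * s.indicator 1 ω - 1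

lemma abs_pmIndicator_le (s : Set Ω) (ω : Ω) : |pmIndicator s ω| ≤ 1 := by
  by_cases h : ω ∈ s <;> norm_num [pmIndicator, h]

lemma measurable_pmIndicator {m : MeasurableSpace Ω} (hs : MeasurableSet[m] s) :
    Measurable[m] (pmIndicator s) :=
  (measurable_const.indicator hs).const_mul 2 |>.sub_const 1

lemma integrable_pmIndicator (hs : MeasurableSet s) : Integrable (pmIndicator s) μ :=
  .of_bound (measurable_pmIndicator hs).aestronglyMeasurable 1
    (.of_forall (abs_pmIndicator_le s))

lemma pmIndicator_setOf_nonneg_mul_eq_abs (ξ : Ω → ℝ) (ω : Ω) :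
    pmIndicator {ω | 0 ≤ ξ ω} ω * ξ ω = |ξ ω| := by
  by_cases h : 0 ≤ ξ ω
  · norm_num [pmIndicator, h, abs_of_nonneg h]
  · norm_num [pmIndicator, h, abs_of_neg (not_le.1 h)]

lemma covariance_pmIndicator (hA : MeasurableSet A) (hB : MeasurableSet B) :
    cov[pmIndicator A, pmIndicator B; μ]
      = 4 * ((μ (A ∩ B)).toReal - (μ A).toReal * (μ B).toReal) := by
  have hiA : Integrable (A.indicator (1 : Ω → ℝ)) μ := (integrable_const 1).indicator hA
  have hiB : Integrable (B.indicator (1 : Ω → ℝ)) μ := (integrable_const 1).indicator hB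
  have hiAB : Integrable (A.indicator (1 : Ω → ℝ) * B.indicator 1) μ := by
    rw [← Set.inter_indicator_one]; exact (integrable_const 1).indicator (hA.inter hB)
  unfold pmIndicator
  rw [covariance_sub_const_left (hiA.const_mul 2), covariance_sub_const_right (hiB.const_mul 2),
    covariance_const_mul_left, covariance_const_mul_right,
    covariance_eq_sub_of_integrable hiA hiB hiAB, ← Set.inter_indicator_one,
    integral_indicator_one hA, integral_indicator_one hB, integral_indicator_one (hA.inter hB)]
  simp only [measureReal_def]
  ring

lemma abs_covariance_pmIndicator_le {m₁ m₂ : MeasurableSpace Ω} (hm₁ : m₁ ≤ m0) (hm₂ : m₂ ≤ m0)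
    (hA : MeasurableSet[m₁] A) (hB : MeasurableSet[m₂] B) :
    |cov[pmIndicator A, pmIndicator B; μ]| ≤ 4 * alphaMix μ m₁ m₂ := by
  rw [covariance_pmIndicator (hm₁ A hA) (hm₂ B hB), abs_mul, abs_of_pos four_pos]
  exact mul_le_mul_of_nonneg_left (abs_le_alphaMix hA hB) zero_le_four

end Mixing

section CondExp

variable {Ω : Type*} {m m₁ m₂ m0 : MeasurableSpace Ω} {μ : Measure Ω} [IsProbabilityMeasure μ]
  {g h : Ω → ℝ} {N : ℝ}

lemma covariance_eq_integral_mul_condExp_sub (hm : m ≤ m0) (hh : StronglyMeasurable[m] h)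
    (hhi : Integrable h μ) (hg : Integrable g μ) (hhg : Integrable (h * g) μ) :
    cov[h, g; μ] = ∫ ω, h ω * (μ[g|m] ω - μ[g]) ∂μ := by
  have hce : μ[h * g|m] =ᵐ[μ] h * μ[g|m] := condExp_mul_of_stronglyMeasurable_left hh hhg hg
  have hhce : Integrable (fun ω => h ω * μ[g|m] ω) μ := integrable_condExp.congr hce
  simp_rw [mul_sub]
  rw [covariance_eq_sub_of_integrable hhi hg hhg, ← integral_condExp hm, integral_congr_ae hce,
    integral_sub hhce (hhi.mul_const _), integral_mul_const]
  rfl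

lemma abs_covariance_le_mul_integral_abs_condExp_sub (hm : m ≤ m0)
    (hh : StronglyMeasurable[m] h) (hhN : ∀ᵐ ω ∂μ, |h ω| ≤ N) (hg : Integrable g μ) :
    |cov[h, g; μ]| ≤ N * ∫ ω, |μ[g|m] ω - μ[g]| ∂μ := by
  have hhm : AEStronglyMeasurable h μ := (hh.mono hm).aestronglyMeasurable
  have hξ : Integrable (fun ω => μ[g|m] ω - μ[g]) μ := integrable_condExp.sub (integrable_const _)
  rw [covariance_eq_integral_mul_condExp_sub hm hh (.of_bound hhm N hhN) hg (hg.bdd_mul hhm hhN),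
    ← integral_const_mul, ← Real.norm_eq_abs]
  refine norm_integral_le_of_norm_le (hξ.abs.const_mul N) ?_
  filter_upwards [hhN] with ω hω
  rw [Real.norm_eq_abs, abs_mul]
  exact mul_le_mul_of_nonneg_right hω (abs_nonneg _)

lemma exists_covariance_pmIndicator_eq_integral_abs_condExp_sub (hm : m ≤ m0)
    (hg : Integrable g μ) :
    ∃ A, MeasurableSet[m] A ∧ cov[pmIndicator A, g; μ] = ∫ ω, |μ[g|m] ω - μ[g]| ∂μ := by
  set ξ := fun ω => μ[g|m] ω - μ[g]
  have hξ : StronglyMeasurable[m] ξ := stronglyMeasurable_condExp.sub stronglyMeasurable_const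
  have hA : MeasurableSet[m] {ω | 0 ≤ ξ ω} := measurableSet_le measurable_const hξ.measurable
  have hε := measurable_pmIndicator hA
  have hbd : ∀ᵐ ω ∂μ, ‖pmIndicator {ω | 0 ≤ ξ ω} ω‖ ≤ 1 := .of_forall (abs_pmIndicator_le _)
  refine ⟨_, hA, ?_⟩
  rw [covariance_eq_integral_mul_condExp_sub hm hε.stronglyMeasurable (integrable_pmIndicator
    (hm _ hA)) hg (hg.bdd_mul (hε.mono hm le_rfl).aestronglyMeasurable hbd)]
  exact integral_congr_ae (.of_forall (pmIndicator_setOf_nonneg_mul_eq_abs ξ))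

lemma integral_abs_condExp_sub_le (hm₁ : m₁ ≤ m0) (hm₂ : m₂ ≤ m0)
    (hg : StronglyMeasurable[m₂] g) (hgN : ∀ᵐ ω ∂μ, |g ω| ≤ N) :
    ∫ ω, |μ[g|m₁] ω - μ[g]| ∂μ ≤ 4 * alphaMix μ m₁ m₂ * N := by
  have hN : 0 ≤ N := (abs_nonneg _).trans hgN.exists.choose_spec
  have hgi : Integrable g μ := .of_bound (hg.mono hm₂).aestronglyMeasurable N hgN
  obtain ⟨A, hA, hgA⟩ := exists_covariance_pmIndicator_eq_integral_abs_condExp_sub hm₁ hgi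
  obtain ⟨B, hB, hAB⟩ := exists_covariance_pmIndicator_eq_integral_abs_condExp_sub hm₂
    (integrable_pmIndicator (μ := μ) (hm₁ _ hA))
  calc ∫ ω, |μ[g|m₁] ω - μ[g]| ∂μ = cov[g, pmIndicator A; μ] := by rw [covariance_comm, hgA]
    _ ≤ N * ∫ ω, |μ[pmIndicator A|m₂] ω - μ[pmIndicator A]| ∂μ :=
      (le_abs_self _).trans (abs_covariance_le_mul_integral_abs_condExp_sub hm₂ hg hgN
        (integrable_pmIndicator (hm₁ _ hA)))
    _ = N * cov[pmIndicator A, pmIndicator B; μ] := by rw [covariance_comm, hAB]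
    _ ≤ N * (4 * alphaMix μ m₁ m₂) := mul_le_mul_of_nonneg_left
      ((le_abs_self _).trans (abs_covariance_pmIndicator_le hm₁ hm₂ hA hB)) hN
    _ = 4 * alphaMix μ m₁ m₂ * N := mul_comm _ _

end CondExp

section Bounded

variable {Ω : Type*} {m₁ m₂ m0 : MeasurableSpace Ω} {μ : Measure Ω} [IsProbabilityMeasure μ]
  {η X Y : Ω → ℝ} {q q' : ℝ≥0∞} {M N : ℝ}

lemma toReal_eLpNorm_le_of_ae_abs_le (hq : 1 ≤ q) (hq' : q ≠ ∞) (hη : Integrable η μ)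
    (hM : ∀ᵐ ω ∂μ, |η ω| ≤ M) :
    (eLpNorm η q μ).toReal ≤ M ^ (1 - 1 / q.toReal) * (∫ ω, |η ω| ∂μ) ^ (1 / q.toReal) := by
  set θ := 1 / q.toReal
  have hq1 : 1 ≤ q.toReal := by simpa using ENNReal.toReal_mono hq' hq
  have hθ1 : θ ≤ 1 := div_le_one_of_le₀ hq1 (by positivity)
  have hM0 : 0 ≤ M := (abs_nonneg _).trans hM.exists.choose_spec
  have hexp : q * ENNReal.ofReal θ = 1 := by
    rw [← ENNReal.ofReal_toReal hq', ← ENNReal.ofReal_mul (by positivity), mul_one_div_cancel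
      (by positivity), ENNReal.ofReal_one]
  have hpt : ∀ᵐ ω ∂μ, |η ω| ≤ M ^ (1 - θ) * |η ω| ^ θ := by
    filter_upwards [hM] with ω hω
    refine (abs_eq_abs_rpow_one_sub_mul_abs_rpow (η ω) θ).trans_le ?_
    gcongr
  have h := toReal_eLpNorm_le_of_ae_abs_le_mul_rpow (p := q) (by positivity) (by positivity)
    (hexp ▸ memLp_one_iff_integrable.2 hη) hpt
  rwa [hexp, toReal_eLpNorm_one_eq_integral_abs hη] at h

lemma two_mul_rpow_mul_four_mul_rpow_le {α θ : ℝ} (hα : 0 ≤ α) (hN : 0 ≤ N) (hθ : θ ≤ 1) :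
    (2 * N) ^ (1 - θ) * (4 * α * N) ^ θ ≤ 4 * α ^ θ * N := by
  have h2 : (2 : ℝ) ^ θ ≤ 2 := by
    simpa using Real.rpow_le_rpow_of_exponent_le one_le_two hθ
  calc (2 * N) ^ (1 - θ) * (4 * α * N) ^ θ
      = (2 * N) ^ (1 - θ) * (2 * N) ^ θ * (2 ^ θ * α ^ θ) := by
        rw [show 4 * α * N = 2 * N * (2 * α) by ring,
          Real.mul_rpow (x := 2 * N) (by positivity) (by positivity), Real.mul_rpow zero_le_two hα]
        ring
    _ = 2 * N * (2 ^ θ * α ^ θ) := by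
        rw [← Real.rpow_add' (by positivity) (by simp), sub_add_cancel, Real.rpow_one]
    _ ≤ 2 * N * (2 * α ^ θ) := by gcongr
    _ = 4 * α ^ θ * N := by ring

lemma abs_covariance_le_of_ae_abs_le [q.HolderConjugate q'] (hq' : q' ≠ ∞)
    (hm₁ : m₁ ≤ m0) (hm₂ : m₂ ≤ m0) (hX : StronglyMeasurable[m₁] X) (hXq : MemLp X q μ)
    (hY : StronglyMeasurable[m₂] Y) (hYN : ∀ᵐ ω ∂μ, |Y ω| ≤ N) :
    |cov[X, Y; μ]| ≤ 4 * alphaMix μ m₁ m₂ ^ (1 / q'.toReal) * N * (eLpNorm X q μ).toReal := by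
  have hN : 0 ≤ N := (abs_nonneg _).trans hYN.exists.choose_spec
  have hq'1 : 1 ≤ q' := ENNReal.HolderTriple.le q' q 1
  have hYm : AEStronglyMeasurable Y μ := (hY.mono hm₂).aestronglyMeasurable
  have hYi : Integrable Y μ := .of_bound hYm N hYN
  have hXi : Integrable X μ := hXq.integrable (ENNReal.HolderTriple.le q q' 1)
  set η := fun ω => μ[Y|m₁] ω - μ[Y]
  have hηi : Integrable η μ := integrable_condExp.sub (integrable_const _)
  have hηN : ∀ᵐ ω ∂μ, |η ω| ≤ 2 * N := by
    have hmean : |μ[Y]| ≤ N := by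
      simpa using norm_integral_le_of_norm_le_const (μ := μ) (f := Y) (C := N) hYN
    filter_upwards [ae_bdd_abs_condExp_of_ae_bdd_abs (m := m₁) hYN] with ω hω
    exact (abs_sub _ _).trans (by linarith)
  have hηq' : MemLp η q' μ :=
    (memLp_top_of_bound hηi.1 (2 * N) (by simpa using hηN)).mono_exponent le_top
  rw [covariance_eq_integral_mul_condExp_sub hm₁ hX hXi hYi (hXi.mul_bdd hYm hYN)]
  calc |∫ ω, X ω * η ω ∂μ| ≤ (eLpNorm X q μ).toReal * (eLpNorm η q' μ).toReal :=
        abs_integral_mul_le_toReal_eLpNorm_mul hXq hηq'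
    _ ≤ (eLpNorm X q μ).toReal *
          ((2 * N) ^ (1 - 1 / q'.toReal) * (4 * alphaMix μ m₁ m₂ * N) ^ (1 / q'.toReal)) := by
        gcongr
        refine (toReal_eLpNorm_le_of_ae_abs_le hq'1 hq' hηi hηN).trans ?_
        gcongr
        exact integral_abs_condExp_sub_le hm₁ hm₂ hY hYN
    _ ≤ (eLpNorm X q μ).toReal * (4 * alphaMix μ m₁ m₂ ^ (1 / q'.toReal) * N) := by
        refine mul_le_mul_of_nonneg_left ?_ ENNReal.toReal_nonneg
        exact two_mul_rpow_mul_four_mul_rpow_le alphaMix_nonneg hN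
          (div_le_one_of_le₀ (by simpa using ENNReal.toReal_mono hq' hq'1) ENNReal.toReal_nonneg)
    _ = _ := by ring

end Bounded

section Truncation

variable {Ω : Type*} {m₁ m₂ m0 : MeasurableSpace Ω} {μ : Measure Ω} [IsProbabilityMeasure μ]
  {X Y : Ω → ℝ} {p q q' r : ℝ≥0∞} {N : ℝ}

lemma abs_covariance_le_of_truncation [q.HolderConjugate q'] (hq' : q' ≠ ∞) (hq'p : q' ≤ p)
    (hp : p ≠ ∞) (hm₁ : m₁ ≤ m0) (hm₂ : m₂ ≤ m0) (hX : StronglyMeasurable[m₁] X)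
    (hXq : MemLp X q μ) (hY : StronglyMeasurable[m₂] Y) (hYp : MemLp Y p μ) (hN : 0 < N) :
    |cov[X, Y; μ]| ≤ 4 * alphaMix μ m₁ m₂ ^ (1 / q'.toReal) * N * (eLpNorm X q μ).toReal
      + 2 * (eLpNorm X q μ).toReal
        * (N ^ (1 - p.toReal / q'.toReal) * (eLpNorm Y p μ).toReal ^ (p.toReal / q'.toReal)) := by
  set S := {ω | N < |Y ω|}
  have hS : MeasurableSet[m₂] S := (measurable_abs.comp hY.measurable) measurableSet_Ioi
  have hYbdd : ∀ ω, |Sᶜ.indicator Y ω| ≤ N := fun ω => by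
    by_cases hω : ω ∈ S
    · rw [Set.indicator_of_notMem (Set.notMem_compl_iff.2 hω), abs_zero]
      exact hN.le
    · rw [Set.indicator_of_mem hω]
      exact not_lt.1 hω
  have hq'1 : 1 ≤ q' := ENNReal.HolderTriple.le q' q 1
  have hY₁ : StronglyMeasurable[m₂] (Sᶜ.indicator Y) := hY.indicator hS.compl
  have hY₁m : AEStronglyMeasurable (Sᶜ.indicator Y) μ := (hY₁.mono hm₂).aestronglyMeasurable
  have hY₂ : MemLp (S.indicator Y) q' μ := (hYp.mono_exponent hq'p).indicator (hm₂ _ hS)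
  have hXi : Integrable X μ := hXq.integrable (ENNReal.HolderTriple.le q q' 1)
  have hsplit : cov[X, Y; μ] = cov[X, Sᶜ.indicator Y; μ] + cov[X, S.indicator Y; μ] := by
    conv_lhs => rw [← Set.indicator_compl_add_self S Y]
    exact covariance_add_right_of_integrable hXi (.of_bound hY₁m N (.of_forall hYbdd))
      (hY₂.integrable hq'1) (hXi.mul_bdd hY₁m (.of_forall hYbdd)) (hXq.integrable_mul hY₂)
  rw [hsplit]
  refine (abs_add_le _ _).trans (add_le_add ?_ ?_)
  · exact abs_covariance_le_of_ae_abs_le hq' hm₁ hm₂ hX hXq hY₁ (.of_forall hYbdd)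
  · refine (abs_covariance_le_two_mul hXq hY₂).trans ?_
    gcongr
    exact toReal_eLpNorm_indicator_lt_abs_le hN (one_pos.trans_le hq'1).ne' hq' hq'p hp hYp

lemma mul_rpow_neg_rpow_one_sub_mul_rpow {α b s θ : ℝ} (hα : 0 < α) (hb : 0 < b) :
    (b * α ^ (-s)) ^ (1 - θ) * b ^ θ = b * α ^ (s * (θ - 1)) := by
  rw [Real.mul_rpow hb.le (by positivity), ← Real.rpow_mul hα.le, mul_right_comm,
    ← Real.rpow_add hb, sub_add_cancel, Real.rpow_one]
  ring_nf

lemma one_div_toReal_eq_add_of_holderTriple [p.HolderTriple r q'] (hp : p ≠ 0) (hr : r ≠ 0) :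
    1 / q'.toReal = (1 / p).toReal + (1 / r).toReal := by
  rw [← ENNReal.toReal_add (by simpa using hp) (by simpa using hr),
    ← ENNReal.HolderTriple.one_div_eq p r q', ENNReal.toReal_div, ENNReal.toReal_one]

lemma abs_covariance_le_six_mul_of_pos [q.HolderConjugate q'] [p.HolderTriple r q']
    (hq' : q' ≠ ∞) (hp : p ≠ ∞) (hm₁ : m₁ ≤ m0) (hm₂ : m₂ ≤ m0) (hX : StronglyMeasurable[m₁] X)
    (hXq : MemLp X q μ) (hY : StronglyMeasurable[m₂] Y) (hYp : MemLp Y p μ)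
    (hα : 0 < alphaMix μ m₁ m₂) (hb : 0 < (eLpNorm Y p μ).toReal) :
    |cov[X, Y; μ]| ≤ 6 * alphaMix μ m₁ m₂ ^ (1 / r).toReal * (eLpNorm X q μ).toReal
      * (eLpNorm Y p μ).toReal := by
  set α := alphaMix μ m₁ m₂
  set b := (eLpNorm Y p μ).toReal
  set s := (1 / p).toReal
  set v := (1 / r).toReal
  have hq'1 : 1 ≤ q' := ENNReal.HolderTriple.le q' q 1
  have hp1 : 1 ≤ p := hq'1.trans (ENNReal.HolderTriple.le p r q')
  have hr1 : 1 ≤ r := hq'1.trans (ENNReal.HolderTriple.le r p q')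
  have hq'inv : 1 / q'.toReal = s + v :=
    one_div_toReal_eq_add_of_holderTriple (one_pos.trans_le hp1).ne' (one_pos.trans_le hr1).ne'
  have hsp : s * p.toReal = 1 := by
    simp only [s, ENNReal.toReal_div, ENNReal.toReal_one]
    exact one_div_mul_cancel (ENNReal.toReal_pos (one_pos.trans_le hp1).ne' hp).ne'
  have hexp : s * (p.toReal / q'.toReal - 1) = v := by
    rw [div_eq_mul_one_div, hq'inv]
    linear_combination (s + v) * hsp
  have h := abs_covariance_le_of_truncation hq' (ENNReal.HolderTriple.le p r q') hp hm₁ hm₂ hX hXq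
    hY hYp (N := b * α ^ (-s)) (by positivity)
  rw [mul_rpow_neg_rpow_one_sub_mul_rpow hα hb, hexp, hq'inv] at h
  refine h.trans_eq ?_
  rw [mul_assoc 4, mul_left_comm _ b, ← Real.rpow_add hα, add_neg_cancel_comm]
  ring

lemma abs_covariance_le_six_mul [q.HolderConjugate q'] [p.HolderTriple r q'] (hq' : q' ≠ ∞)
    (hm₁ : m₁ ≤ m0) (hm₂ : m₂ ≤ m0) (hX : StronglyMeasurable[m₁] X) (hXq : MemLp X q μ)
    (hY : StronglyMeasurable[m₂] Y) (hYp : MemLp Y p μ) :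
    |cov[X, Y; μ]| ≤ 6 * alphaMix μ m₁ m₂ ^ (1 / r).toReal * (eLpNorm X q μ).toReal
      * (eLpNorm Y p μ).toReal := by
  have hα : 0 ≤ alphaMix μ m₁ m₂ := alphaMix_nonneg
  have hbound : 0 ≤ 6 * alphaMix μ m₁ m₂ ^ (1 / r).toReal * (eLpNorm X q μ).toReal
      * (eLpNorm Y p μ).toReal := by positivity
  have hq'1 : 1 ≤ q' := ENNReal.HolderTriple.le q' q 1
  have hp1 : 1 ≤ p := hq'1.trans (ENNReal.HolderTriple.le p r q')
  have hr1 : 1 ≤ r := hq'1.trans (ENNReal.HolderTriple.le r p q')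
  rcases hα.eq_or_lt with hα0 | hαpos
  · have hind : X ⟂ᵢ[μ] Y := (IndepFun_iff_Indep X Y μ).2 <| indep_of_indep_of_le_right
      (indep_of_indep_of_le_left (indep_of_alphaMix_eq_zero hα0.symm) hX.measurable.comap_le)
      hY.measurable.comap_le
    rw [hind.covariance_eq_zero_of_integrable (hXq.integrable (ENNReal.HolderTriple.le q q' 1))
      (hYp.integrable hp1), abs_zero]
    exact hbound
  by_cases hp : p = ∞
  · subst hp
    have hYb : ∀ᵐ ω ∂μ, |Y ω| ≤ (eLpNorm Y ∞ μ).toReal := by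
      simpa [← toReal_eLpNorm hYp.1] using ae_le_lpNorm_exponent_top hYp
    have hq'inv : 1 / q'.toReal = (1 / r).toReal := by
      simpa using one_div_toReal_eq_add_of_holderTriple (p := ∞) (r := r) (q' := q') (by simp)
        (one_pos.trans_le hr1).ne'
    have h := abs_covariance_le_of_ae_abs_le hq' hm₁ hm₂ hX hXq hY hYb
    rw [hq'inv] at h
    refine h.trans (le_of_sub_nonneg ?_)
    ring_nf
    positivity
  rcases ENNReal.toReal_nonneg.eq_or_lt with hb0 | hbpos
  · have hY0 : ∀ᵐ ω ∂μ, |Y ω| ≤ 0 := by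
      have := (eLpNorm_eq_zero_iff hYp.1 (one_pos.trans_le hp1).ne').1
        ((ENNReal.toReal_eq_zero_iff _).1 hb0.symm |>.resolve_right hYp.eLpNorm_ne_top)
      filter_upwards [this] with ω hω
      simp [hω]
    have h := abs_covariance_le_of_ae_abs_le hq' hm₁ hm₂ hX hXq hY hY0
    rw [mul_zero, zero_mul] at h
    exact h.trans hbound
  exact abs_covariance_le_six_mul_of_pos hq' hp hm₁ hm₂ hX hXq hY hYp hαpos hbpos

end Truncation

theorem davydov_inequality_general {Ω : Type*} {m0 : MeasurableSpace Ω} (μ : Measure Ω)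
    [IsProbabilityMeasure μ]
    (m₁ m₂ : MeasurableSpace Ω) (hm₁ : m₁ ≤ m0) (hm₂ : m₂ ≤ m0)
    (X Y : Ω → ℝ) (hX : Measurable[m₁] X) (hY : Measurable[m₂] Y)
    (p q r : ℝ≥0∞)
    (hpqr : 1 / p + 1 / q + 1 / r = 1)
    (hXq : MemLp X q μ) (hYp : MemLp Y p μ) :
    |cov' μ X Y| ≤ 2 * Real.pi * alphaMix μ m₁ m₂ ^ (1 / r).toReal *
      (eLpNorm X q μ).toReal * (eLpNorm Y p μ).toReal := by
  have hπ : 6 ≤ 2 * Real.pi := by linarith [Real.pi_gt_three]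
  have hnonneg : 0 ≤ alphaMix μ m₁ m₂ ^ (1 / r).toReal * (eLpNorm X q μ).toReal
      * (eLpNorm Y p μ).toReal := by
    have := alphaMix_nonneg (μ := μ) (m₁ := m₁) (m₂ := m₂)
    positivity
  -- `cov' μ X Y` and `cov[X, Y; μ]` are definitionally equal.
  by_cases hr : r = ∞
  · subst hr
    have : q.HolderConjugate p := by
      rw [ENNReal.holderConjugate_iff]
      simpa [add_comm] using hpqr
    refine (abs_covariance_le_two_mul hXq hYp).trans ?_
    simp only [ENNReal.div_top, ENNReal.toReal_zero, Real.rpow_zero, mul_one]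
    gcongr
    linarith
  have : p.HolderTriple r (p⁻¹ + r⁻¹)⁻¹ := .of p r
  have : q.HolderConjugate (p⁻¹ + r⁻¹)⁻¹ := by
    rw [ENNReal.holderConjugate_iff, inv_inv, ← add_assoc, add_comm q⁻¹]
    simpa using hpqr
  refine (abs_covariance_le_six_mul (p := p) (q := q) (r := r) (q' := (p⁻¹ + r⁻¹)⁻¹) (by simp [hr])
    hm₁ hm₂ hX.stronglyMeasurable hXq hY.stronglyMeasurable hYp).trans ?_
  linarith [mul_le_mul_of_nonneg_right hπ hnonneg]

theorem davydov_inequality {Ω : Type*} {m0 : MeasurableSpace Ω} (μ : Measure Ω)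
    [IsProbabilityMeasure μ]
    (m₁ m₂ : MeasurableSpace Ω) (hm₁ : m₁ ≤ m0) (hm₂ : m₂ ≤ m0)
    (X Y : Ω → ℝ) (hX : Measurable[m₁] X) (hY : Measurable[m₂] Y)
    (p q r : ℝ≥0∞) (hp : 1 ≤ p) (hq : 1 ≤ q) (hr : 1 ≤ r)
    (hpqr : 1 / p + 1 / q + 1 / r = 1)
    (hXq : MemLp X q μ) (hYp : MemLp Y p μ) :
    |cov' μ X Y| ≤ 2 * Real.pi * alphaMix μ m₁ m₂ ^ (1 / r).toReal *
      (eLpNorm X q μ).toReal * (eLpNorm Y p μ).toReal :=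
  davydov_inequality_general μ m₁ m₂ hm₁ hm₂ X Y hX hY p q r hpqr hXq hYp
end
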